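/- Let R be a commutative ring, let x be an invertible element of R with x̄ := x^{−1}, let a = (a_1, a_2, …) be a sequence in R, and let m ≥ 0 be an integer. Then (x − 1) · h^{oo}_m((x),(x̄)|a) = x·(x|a)^m − (x̄|a)^m. (This is the one-variable case of the paper's identity (x^{1/2} − x̄^{1/2})·h^{oo}_m = x^{1/2}(x|a)^m − x̄^{1/2}(x̄|a)^m, cleared of half-integer powers by multiplying through by x^{1/2}.) -/

import Mathlib

open Finset

noncomputable def geom {R : Type*} [CommRing R] (x : R) : PowerSeries R :=
  PowerSeries.mk fun k => x ^ k

noncomputable def lin {R : Type*} [CommRing R] (a : R) : PowerSeries R :=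
  1 + PowerSeries.C a * PowerSeries.X

noncomputable def facpow {R : Type*} [CommRing R] (x : R) (a : ℕ → R) (m : ℕ) : R :=
  ∏ j ∈ Finset.range m, (x + a (j + 1))

noncomputable def hgl {R : Type*} [CommRing R] {n : ℕ} (x : Fin n → R) (a : ℕ → R) (m : ℤ) : R :=
  if 0 ≤ m then
    PowerSeries.coeff m.toNat
      ((∏ i, geom (x i)) * ∏ j ∈ Finset.range (n + m.toNat - 1), lin (a (j + 1)))
  else 0

noncomputable def hsp {R : Type*} [CommRing R] {n : ℕ} (x : Fin n → Rˣ) (a : ℕ → R) (m : ℤ) : R :=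
  if 0 ≤ m then
    PowerSeries.coeff m.toNat
      ((∏ i, geom ((x i : R)) * geom (((x i)⁻¹ : Rˣ) : R)) *
        ∏ j ∈ Finset.range (n + m.toNat - 1), lin (a (j + 1)))
  else 0

noncomputable def hoo {R : Type*} [CommRing R] {n : ℕ} (x : Fin n → Rˣ) (a : ℕ → R) (m : ℤ) : R :=
  if 0 ≤ m then
    PowerSeries.coeff m.toNat
      ((1 + PowerSeries.X) * (∏ i, geom ((x i : R)) * geom (((x i)⁻¹ : Rˣ) : R)) *
        ∏ j ∈ Finset.range (n + m.toNat - 1), lin (a (j + 1)))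
  else 0

noncomputable def heo {R : Type*} [CommRing R] {n : ℕ} (x : Fin n → Rˣ) (a : ℕ → R) (m : ℤ) : R :=
  if 0 ≤ m then
    if h : n = 1 then
      (PowerSeries.coeff m.toNat
        ((geom ((x ⟨0, by omega⟩ : Rˣ) : R) + geom (((x ⟨0, by omega⟩)⁻¹ : Rˣ) : R)) *
          ∏ j ∈ Finset.range m.toNat, lin (a (j + 1))))
        - (if m = 0 then 1 else 0)
    else
      PowerSeries.coeff m.toNat
        ((1 - PowerSeries.X ^ 2) * (∏ i, geom ((x i : R)) * geom (((x i)⁻¹ : Rˣ) : R)) *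
          ∏ j ∈ Finset.range (n + m.toNat - 1), lin (a (j + 1)))
  else 0

noncomputable def heod {R : Type*} [CommRing R] {n : ℕ} (x : Fin n → Rˣ) (a : ℕ → R) (m : ℤ) : R :=
  if 0 < m then
    if h : 0 < n then
      PowerSeries.coeff m.toNat
        ((geom ((x ⟨0, h⟩ : Rˣ) : R) - geom (((x ⟨0, h⟩)⁻¹ : Rˣ) : R)) *
          (∏ i ∈ Finset.univ.filter (fun i : Fin n => i ≠ ⟨0, h⟩),
            geom ((x i : R)) * geom (((x i)⁻¹ : Rˣ) : R)) *
          ∏ j ∈ Finset.range (n + m.toNat - 1), lin (a (j + 1)))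
    else 0
  else 0

/-!
With `y = x⁻¹` we have `(1 - x t)(1 - y t) = 1 - (x + y) t + t²`, and partial fractions give
`(x - 1)(1 + t) / ((1 - x t)(1 - y t)) = x / (1 - x t) - 1 / (1 - y t)`.
It remains to read off the coefficient of `t^m` in `∏_{j=1}^{m} (1 + a_j t) / (1 - z t)`,
which is `(z|a)^m`; more generally its coefficient of `t^(m+k)` is `z^k (z|a)^m`, by induction on `m`
since `z^(k+1) (z|a)^m + a_{m+1} z^k (z|a)^m = z^k (z|a)^(m+1)`.
-/

open PowerSeries

lemma one_sub_C_mul_X_mul_geom {R : Type*} [CommRing R] (y : R) :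
    (1 - C y * X) * geom y = 1 := by
  ext k
  cases k with
  | zero => simp [geom]
  | succ n =>
    rw [sub_mul, one_mul, mul_assoc, map_sub, coeff_C_mul, coeff_succ_X_mul]
    simp [geom, pow_succ, mul_comm]

lemma coeff_geom_mul_prod_lin {R : Type*} [CommRing R] (y : R) (a : ℕ → R) (m k : ℕ) :
    coeff (m + k) (geom y * ∏ j ∈ range m, lin (a (j + 1))) = y ^ k * facpow y a m := by
  induction m generalizing k with
  | zero => simp [geom, facpow]
  | succ m ih =>
    have hcoeff : coeff (m + 1 + k) (geom y * ∏ j ∈ range (m + 1), lin (a (j + 1))) =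
        coeff (m + (k + 1)) (geom y * ∏ j ∈ range m, lin (a (j + 1))) +
          a (m + 1) * coeff (m + k) (geom y * ∏ j ∈ range m, lin (a (j + 1))) := by
      rw [prod_range_succ, ← mul_assoc, lin, mul_add, mul_one, map_add, mul_left_comm,
        coeff_C_mul, show m + 1 + k = m + k + 1 by omega, coeff_succ_mul_X]
      ring_nf
    rw [hcoeff, ih, ih, facpow, facpow, prod_range_succ]
    ring

lemma C_sub_one_mul_one_add_X_mul_geom_mul_geom {R : Type*} [CommRing R] {x y : R}
    (hxy : x * y = 1) :
    C (x - 1) * ((1 + X) * (geom x * geom y)) = C x * geom x - geom y := by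
  have hC : C x * C y = (1 : PowerSeries R) := by rw [← map_mul, hxy, map_one]
  rw [map_sub, map_one]
  linear_combination (C x * geom x) * one_sub_C_mul_X_mul_geom y -
    geom y * one_sub_C_mul_X_mul_geom x + (X * geom x * geom y) * hC

theorem hoo_one_variable {R : Type*} [CommRing R] (x : Rˣ) (a : ℕ → R) (m : ℕ) :
    ((x : R) - 1) * hoo (fun _ : Fin 1 => x) a (m : ℤ) =
      (x : R) * facpow ((x : R)) a m - facpow (((x⁻¹ : Rˣ) : R)) a m := by
  have hcoeff (z : R) : coeff m (geom z * ∏ j ∈ range m, lin (a (j + 1))) = facpow z a m := by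
    simpa using coeff_geom_mul_prod_lin z a m 0
  simp only [hoo, Nat.cast_nonneg, if_true, Int.toNat_natCast, Fin.prod_univ_one,
    Nat.add_sub_cancel_left]
  rw [← coeff_C_mul, ← mul_assoc, C_sub_one_mul_one_add_X_mul_geom_mul_geom x.mul_inv,
    sub_mul, map_sub, mul_assoc, coeff_C_mul, hcoeff, hcoeff]
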